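/- Bhattacharyya parameter evolution for one polarization step over two different channels: for any two B-DMCs W₁ and W₂, the bit channels of the single-step polar transform satisfy Z(W⁺) = Z(W₁)·Z(W₂) and Z(W⁻) ≤ Z(W₁) + Z(W₂) − Z(W₁)·Z(W₂). -/

import Mathlib

/-- A binary-input discrete memoryless channel (B-DMC) with finite output alphabet `Y`:
nonnegative transition probabilities summing to one for each input. -/
def IsBDMC {Y : Type} [Fintype Y] (W : ZMod 2 → Y → ℝ) : Prop :=
  (∀ x y, 0 ≤ W x y) ∧ ∀ x, ∑ y, W x y = 1

/-- The symmetric capacity `I(W)` of a B-DMC (terms with `W x y = 0` vanish automatically). -/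
noncomputable def symCap {Y : Type} [Fintype Y] (W : ZMod 2 → Y → ℝ) : ℝ :=
  ∑ x : ZMod 2, ∑ y, (1 / 2) * W x y * Real.logb 2 (W x y / ((W 0 y + W 1 y) / 2))

/-- The Bhattacharyya parameter `Z(W)` of a B-DMC. -/
noncomputable def bhat {Y : Type} [Fintype Y] (W : ZMod 2 → Y → ℝ) : ℝ :=
  ∑ y, Real.sqrt (W 0 y * W 1 y)

/-- The first (minus) bit channel of the single-step polar transform of `W₁` and `W₂`. -/
noncomputable def polarMinus {Y₁ Y₂ : Type} (W₁ : ZMod 2 → Y₁ → ℝ) (W₂ : ZMod 2 → Y₂ → ℝ) :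
    ZMod 2 → Y₁ × Y₂ → ℝ :=
  fun u₁ y => (1 / 2) * ∑ u₂ : ZMod 2, W₁ (u₁ + u₂) y.1 * W₂ u₂ y.2

/-- The second (plus) bit channel of the single-step polar transform of `W₁` and `W₂`. -/
noncomputable def polarPlus {Y₁ Y₂ : Type} (W₁ : ZMod 2 → Y₁ → ℝ) (W₂ : ZMod 2 → Y₂ → ℝ) :
    ZMod 2 → Y₁ × Y₂ × ZMod 2 → ℝ :=
  fun u₂ y => (1 / 2) * W₁ (y.2.2 + u₂) y.1 * W₂ u₂ y.2.1

/-- The zero-capacity (punctured) channel with singleton output alphabet. -/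
def puncturedChannel : ZMod 2 → PUnit → ℝ := fun _ _ => 1

/-!
Both bounds hold output by output. For `W⁺` the two likelihoods at `(y₁, y₂, u₁)` are, up to
the factor `1/2` and in some order, `W₁(0|y₁)W₂(0|y₂)` and `W₁(1|y₁)W₂(1|y₂)`, so the summand of
`Z(W⁺)` factors and the sum over `u₁` cancels the `1/2`. For `W⁻`, writing `a, b = W₁(0|y₁), W₁(1|y₁)`
and `c, d = W₂(0|y₂), W₂(1|y₂)`, the summand is `½√((ac+bd)(ad+bc))`, which is bounded by an
expression affine in each of `√(ab)`, `a+b`, `√(cd)`, `c+d`; summing it over the outputs, where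
`∑ (a+b) = ∑ (c+d) = 2`, gives `Z(W₁) + Z(W₂) − Z(W₁)Z(W₂)`.
-/

open Finset

lemma ZMod.sum_univ_two {M : Type*} [AddCommMonoid M] (f : ZMod 2 → M) :
    ∑ x, f x = f 0 + f 1 :=
  Fin.sum_univ_two f

lemma two_mul_sqrt_mul_le_add {a b : ℝ} (ha : 0 ≤ a) (hb : 0 ≤ b) : 2 * √(a * b) ≤ a + b := by
  have hp : √(a * b) ^ 2 = a * b := Real.sq_sqrt (mul_nonneg ha hb)
  nlinarith [Real.sqrt_nonneg (a * b), sq_nonneg (a - b)]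

/-- `(ac+bd)(ad+bc) = ab(c+d)² + cd(a+b)² − 4abcd`, and the square of the right-hand side
exceeds it by `2√(ab)√(cd)(a+b−2√(ab))(c+d−2√(cd)) ≥ 0`. -/
lemma sqrt_mul_add_mul_le {a b c d : ℝ} (ha : 0 ≤ a) (hb : 0 ≤ b) (hc : 0 ≤ c) (hd : 0 ≤ d) :
    √((a * c + b * d) * (a * d + b * c)) ≤
      √(a * b) * (c + d) + (a + b) * √(c * d) - 2 * (√(a * b) * √(c * d)) := by
  set p := √(a * b)
  set q := √(c * d)
  have hp : p ^ 2 = a * b := Real.sq_sqrt (mul_nonneg ha hb)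
  have hq : q ^ 2 = c * d := Real.sq_sqrt (mul_nonneg hc hd)
  have hab : 0 ≤ a + b - 2 * p := by linarith [two_mul_sqrt_mul_le_add ha hb]
  have hcd : 0 ≤ c + d - 2 * q := by linarith [two_mul_sqrt_mul_le_add hc hd]
  have hp0 : 0 ≤ p := Real.sqrt_nonneg _
  have hq0 : 0 ≤ q := Real.sqrt_nonneg _
  have hgap : (p * (c + d) + (a + b) * q - 2 * (p * q)) ^ 2 - (a * c + b * d) * (a * d + b * c)
      = 2 * p * q * (a + b - 2 * p) * (c + d - 2 * q) := by
    linear_combination ((c + d) ^ 2 - 4 * q ^ 2) * hp + ((a + b) ^ 2 - 4 * a * b) * hq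
  apply Real.sqrt_le_iff.mpr
  constructor
  · nlinarith
  · nlinarith [mul_nonneg (mul_nonneg (mul_nonneg hp0 hq0) hab) hcd]

section PolarTransform

variable {Y₁ Y₂ : Type} (W₁ : ZMod 2 → Y₁ → ℝ) (W₂ : ZMod 2 → Y₂ → ℝ)

lemma polarPlus_zero_mul_one (y : Y₁ × Y₂ × ZMod 2) :
    polarPlus W₁ W₂ 0 y * polarPlus W₁ W₂ 1 y =
      (1 / 2) ^ 2 * ((W₁ 0 y.1 * W₁ 1 y.1) * (W₂ 0 y.2.1 * W₂ 1 y.2.1)) := by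
  obtain ⟨y₁, y₂, u₁⟩ := y
  obtain rfl | rfl : u₁ = 0 ∨ u₁ = 1 := by decide +revert
  all_goals simp only [polarPlus, zero_add, add_zero, CharTwo.add_self_eq_zero]; ring

lemma polarMinus_zero_mul_one (y : Y₁ × Y₂) :
    polarMinus W₁ W₂ 0 y * polarMinus W₁ W₂ 1 y =
      (1 / 2) ^ 2 * ((W₁ 0 y.1 * W₂ 0 y.2 + W₁ 1 y.1 * W₂ 1 y.2) *
        (W₁ 0 y.1 * W₂ 1 y.2 + W₁ 1 y.1 * W₂ 0 y.2)) := by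
  simp only [polarMinus, ZMod.sum_univ_two, zero_add, add_zero, CharTwo.add_self_eq_zero]
  ring

variable [Fintype Y₁] [Fintype Y₂]

lemma bhat_polarPlus (hW₁ : ∀ x y, 0 ≤ W₁ x y) :
    bhat (polarPlus W₁ W₂) = bhat W₁ * bhat W₂ := by
  have hsummand (y : Y₁ × Y₂ × ZMod 2) :
      √(polarPlus W₁ W₂ 0 y * polarPlus W₁ W₂ 1 y) =
        1 / 2 * (√(W₁ 0 y.1 * W₁ 1 y.1) * √(W₂ 0 y.2.1 * W₂ 1 y.2.1)) := by
    rw [polarPlus_zero_mul_one, Real.sqrt_mul (by positivity), Real.sqrt_sq (by norm_num),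
      Real.sqrt_mul (mul_nonneg (hW₁ 0 y.1) (hW₁ 1 y.1))]
  simp only [bhat, hsummand, Fintype.sum_prod_type, sum_const, card_univ, ZMod.card,
    Fintype.sum_mul_sum, nsmul_eq_mul, ← mul_assoc]
  norm_num

lemma IsBDMC.sum_add_eq_two {Y : Type} [Fintype Y] {W : ZMod 2 → Y → ℝ} (hW : IsBDMC W) :
    ∑ y, (W 0 y + W 1 y) = 2 := by
  rw [sum_add_distrib, hW.2 0, hW.2 1]
  norm_num

lemma bhat_polarMinus_le (hW₁ : IsBDMC W₁) (hW₂ : IsBDMC W₂) :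
    bhat (polarMinus W₁ W₂) ≤ bhat W₁ + bhat W₂ - bhat W₁ * bhat W₂ := by
  set f : Y₁ → ℝ := fun y => √(W₁ 0 y * W₁ 1 y)
  set g : Y₂ → ℝ := fun y => √(W₂ 0 y * W₂ 1 y)
  have hsummand (y : Y₁ × Y₂) :
      √(polarMinus W₁ W₂ 0 y * polarMinus W₁ W₂ 1 y) ≤
        1 / 2 * f y.1 * (W₂ 0 y.2 + W₂ 1 y.2) + 1 / 2 * (W₁ 0 y.1 + W₁ 1 y.1) * g y.2
          - f y.1 * g y.2 := by
    rw [polarMinus_zero_mul_one, Real.sqrt_mul (by positivity), Real.sqrt_sq (by norm_num)]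
    have := sqrt_mul_add_mul_le (hW₁.1 0 y.1) (hW₁.1 1 y.1) (hW₂.1 0 y.2) (hW₂.1 1 y.2)
    linarith
  calc bhat (polarMinus W₁ W₂)
      ≤ ∑ y : Y₁ × Y₂, (1 / 2 * f y.1 * (W₂ 0 y.2 + W₂ 1 y.2)
          + 1 / 2 * (W₁ 0 y.1 + W₁ 1 y.1) * g y.2 - f y.1 * g y.2) :=
        sum_le_sum fun y _ => hsummand y
    _ = bhat W₁ + bhat W₂ - bhat W₁ * bhat W₂ := by
        simp only [Fintype.sum_prod_type, sum_sub_distrib, sum_add_distrib, ← mul_sum, ← sum_mul,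
          hW₁.sum_add_eq_two, hW₂.sum_add_eq_two]
        simp only [bhat, f, g]
        ring

end PolarTransform

/-- Bhattacharyya parameter evolution for one polarization step over two
different channels: `Z(W⁺) = Z(W₁)·Z(W₂)` and `Z(W⁻) ≤ Z(W₁) + Z(W₂) − Z(W₁)·Z(W₂)`. -/
theorem bhattacharyya_one_step {Y₁ Y₂ : Type} [Fintype Y₁] [Fintype Y₂]
    (W₁ : ZMod 2 → Y₁ → ℝ) (W₂ : ZMod 2 → Y₂ → ℝ)
    (h₁ : IsBDMC W₁) (h₂ : IsBDMC W₂) :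
    bhat (polarPlus W₁ W₂) = bhat W₁ * bhat W₂ ∧
      bhat (polarMinus W₁ W₂) ≤ bhat W₁ + bhat W₂ - bhat W₁ * bhat W₂ :=
  ⟨bhat_polarPlus W₁ W₂ h₁.1, bhat_polarMinus_le W₁ W₂ h₁ h₂⟩
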